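/- Let a and b be coprime positive integers and m ≥ 0. Then there exists a polynomial P ∈ ℚ[X] with deg P = m and leading coefficient (ab)^{m+1} such that for all k ≥ 1, s_k^m(a,b) = P(k). -/

import Mathlib

/-- `repCount a b j` is the number of representations of `j` in the form
`m * a + n * b` with `m, n : ℕ`. -/
noncomputable def repCount (a b j : ℕ) : ℕ :=
  Nat.card {p : ℕ × ℕ // p.1 * a + p.2 * b = j}

lemma repSet_finite {a b : ℕ} (ha : 0 < a) (hb : 0 < b) (j : ℕ) :
    {p : ℕ × ℕ | p.1 * a + p.2 * b = j}.Finite := by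
  apply Set.Finite.subset (Set.finite_Iic ((j, j) : ℕ × ℕ))
  rintro ⟨x, y⟩ h
  simp only [Set.mem_setOf_eq] at h
  constructor
  · calc x ≤ x * a := Nat.le_mul_of_pos_right x ha
    _ ≤ j := by omega
  · calc y ≤ y * b := Nat.le_mul_of_pos_right y hb
    _ ≤ j := by omega

lemma rep_unique {a b : ℕ} (hb : 0 < b) (hab : Nat.Coprime a b) {j : ℕ} {p q : ℕ × ℕ}
    (hp1 : p.1 < b) (hq1 : q.1 < b)
    (hp : p.1 * a + p.2 * b = j) (hq : q.1 * a + q.2 * b = j) : p = q := by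
  haveI : NeZero b := ⟨hb.ne'⟩
  obtain ⟨x, y⟩ := p; obtain ⟨u, v⟩ := q
  simp only at *
  have hu : IsUnit ((a : ZMod b)) := (ZMod.isUnit_iff_coprime a b).mpr hab
  have hz : ((x : ZMod b)) * a = ((u : ZMod b)) * a := by
    have : ((x * a + y * b : ℕ) : ZMod b) = ((u * a + v * b : ℕ) : ZMod b) := by rw [hp, hq]
    push_cast at this
    simpa [ZMod.natCast_self] using this
  have hxu : (x : ZMod b) = (u : ZMod b) := hu.mul_right_cancel hz
  have h1 : x = u := by
    have := congrArg ZMod.val hxu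
    rwa [ZMod.val_cast_of_lt hp1, ZMod.val_cast_of_lt hq1] at this
  subst h1
  have : y = v := Nat.eq_of_mul_eq_mul_right hb (by omega)
  simp [this]

lemma rep_exists {a b : ℕ} (ha : 0 < a) (hb : 0 < b) (hab : Nat.Coprime a b) {N : ℕ}
    (hN : a * b ≤ N) : ∃ p : ℕ × ℕ, p.1 < b ∧ p.1 * a + p.2 * b = N := by
  haveI : NeZero b := ⟨hb.ne'⟩
  have hu : IsUnit ((a : ZMod b)) := (ZMod.isUnit_iff_coprime a b).mpr hab
  set m0 := ((N : ZMod b) * (a : ZMod b)⁻¹).val with hm0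
  have hm0b : m0 < b := ZMod.val_lt _
  have hcong : ((m0 * a : ℕ) : ZMod b) = (N : ZMod b) := by
    push_cast [hm0]
    rw [ZMod.natCast_val, ZMod.cast_id]
    rw [mul_assoc, ZMod.inv_mul_of_unit _ hu, mul_one]
  have hle : m0 * a ≤ N := by
    have h1 : m0 * a ≤ (b - 1) * a := Nat.mul_le_mul_right _ (by omega)
    have h2 : (b - 1) * a = b * a - a := by rw [Nat.sub_mul, one_mul]
    have h3 : b * a = a * b := Nat.mul_comm b a
    omega
  have hdvd : b ∣ N - m0 * a :=
    (Nat.modEq_iff_dvd' hle).mp ((ZMod.natCast_eq_natCast_iff _ _ _).mp hcong)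
  obtain ⟨n0, hn0⟩ := hdvd
  refine ⟨(m0, n0), hm0b, ?_⟩
  simp only
  rw [Nat.mul_comm n0 b]
  omega

lemma repCount_add (a b : ℕ) (ha : 0 < a) (hb : 0 < b) (hab : Nat.Coprime a b) (j : ℕ) :
    repCount a b (j + a * b) = repCount a b j + 1 := by
  haveI : Finite {p : ℕ × ℕ // p.1 * a + p.2 * b = j} :=
    (repSet_finite ha hb j).to_subtype
  haveI : Finite {p : ℕ × ℕ // p.1 * a + p.2 * b = j + a * b} :=
    (repSet_finite ha hb (j + a * b)).to_subtype
  obtain ⟨p0, hp01, hp0⟩ := rep_exists ha hb hab (Nat.le_add_left (a * b) j)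
  have hba : b * a = a * b := Nat.mul_comm b a
  have e : {p : ℕ × ℕ // p.1 * a + p.2 * b = j + a * b} ≃
      ({p : ℕ × ℕ // p.1 * a + p.2 * b = j} ⊕ Unit) :=
    { toFun := fun p => if h : b ≤ p.1.1 then Sum.inl ⟨(p.1.1 - b, p.1.2), by
          have hp := p.2
          have h2 : b * a ≤ p.1.1 * a := Nat.mul_le_mul_right _ h
          simp only [Nat.sub_mul]
          omega⟩
        else Sum.inr Unit.unit
      invFun := Sum.elim (fun q => ⟨(q.1.1 + b, q.1.2), by
          have hq := q.2
          simp only [Nat.add_mul]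
          omega⟩) (fun _ => ⟨p0, hp0⟩)
      left_inv := by
        rintro ⟨⟨x, y⟩, hxy⟩
        by_cases h : b ≤ x
        · simp only [dif_pos h, Sum.elim_inl]
          exact Subtype.ext (show ((x - b + b : ℕ), y) = (x, y) by rw [Nat.sub_add_cancel h])
        · simp only [dif_neg h, Sum.elim_inr]
          exact Subtype.ext (rep_unique hb hab hp01 (show x < b from Nat.not_le.mp h) hp0 hxy)
      right_inv := by
        rintro (⟨⟨x, y⟩, hxy⟩ | ⟨⟩)
        · simp only [Sum.elim_inl, dif_pos (Nat.le_add_left b x)]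
          refine (dif_pos (Nat.le_add_left b x)).trans ?_
          congr 1
          exact Subtype.ext (by simp)
        · simp only [Sum.elim_inr, dif_neg (Nat.not_le.mpr hp01)]
          exact dif_neg (Nat.not_le.mpr hp01) }
  rw [repCount, repCount, Nat.card_congr e, Nat.card_sum]
  simp

lemma repCount_add_mul (a b : ℕ) (ha : 0 < a) (hb : 0 < b) (hab : Nat.Coprime a b)
    (j t : ℕ) : repCount a b (j + a * b * t) = repCount a b j + t := by
  induction t with
  | zero => simp
  | succ t ih =>
    have : j + a * b * (t + 1) = (j + a * b * t) + a * b := by ring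
    rw [this, repCount_add a b ha hb hab, ih]
    omega

lemma le_of_two_le_repCount {a b : ℕ} (ha : 0 < a) (hb : 0 < b) (hab : Nat.Coprime a b)
    {j : ℕ} (h2 : 2 ≤ repCount a b j) : a * b ≤ j := by
  haveI : Finite {p : ℕ × ℕ // p.1 * a + p.2 * b = j} := (repSet_finite ha hb j).to_subtype
  have : Nontrivial {p : ℕ × ℕ // p.1 * a + p.2 * b = j} :=
    Finite.one_lt_card_iff_nontrivial.mp (by unfold repCount at h2; omega)
  obtain ⟨⟨p, hp⟩, ⟨q, hq⟩, hne⟩ := this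
  have hne' : p ≠ q := fun h => hne (Subtype.ext h)
  haveI : NeZero b := ⟨hb.ne'⟩
  have hu : IsUnit ((a : ZMod b)) := (ZMod.isUnit_iff_coprime a b).mpr hab
  have hmod : (p.1 : ZMod b) = (q.1 : ZMod b) := by
    have h1 : ((p.1 * a : ℕ) : ZMod b) = ((q.1 * a : ℕ) : ZMod b) := by
      have : ((p.1 * a + p.2 * b : ℕ) : ZMod b) = ((q.1 * a + q.2 * b : ℕ) : ZMod b) := by
        rw [hp, hq]
      push_cast at this
      simpa [ZMod.natCast_self] using this
    push_cast at h1
    exact hu.mul_left_cancel (by rwa [mul_comm (p.1 : ZMod b), mul_comm (q.1 : ZMod b)] at h1)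
  have hmodeq : p.1 ≡ q.1 [MOD b] := (ZMod.natCast_eq_natCast_iff _ _ _).mp hmod
  have hfst : p.1 ≠ q.1 := by
    intro h
    apply hne'
    rw [h] at hp
    have : p.2 = q.2 := Nat.eq_of_mul_eq_mul_right hb (by omega)
    exact Prod.ext h this
  rcases Nat.lt_or_ge p.1 q.1 with h | h
  · have hd : b ∣ q.1 - p.1 := (Nat.modEq_iff_dvd' h.le).mp hmodeq
    have hbq : b ≤ q.1 := le_trans (Nat.le_of_dvd (by omega) hd) (by omega)
    calc a * b = b * a := Nat.mul_comm a b
    _ ≤ q.1 * a := Nat.mul_le_mul_right _ hbq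
    _ ≤ j := by omega
  · have h' : q.1 < p.1 := by omega
    have hd : b ∣ p.1 - q.1 := (Nat.modEq_iff_dvd' h'.le).mp hmodeq.symm
    have hbq : b ≤ p.1 := le_trans (Nat.le_of_dvd (by omega) hd) (by omega)
    calc a * b = b * a := Nat.mul_comm a b
    _ ≤ p.1 * a := Nat.mul_le_mul_right _ hbq
    _ ≤ j := by omega

lemma exists_one_rep {a b : ℕ} (ha : 0 < a) (hb : 0 < b) (hab : Nat.Coprime a b) :
    ∀ j : ℕ, 1 ≤ repCount a b j →
      ∃ j' : ℕ, j' % (a * b) = j % (a * b) ∧ repCount a b j' = 1 := by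
  intro j
  induction j using Nat.strong_induction_on with
  | _ j ih =>
    intro h1
    rcases Nat.lt_or_ge (repCount a b j) 2 with h | h
    · exact ⟨j, rfl, by omega⟩
    · have hle : a * b ≤ j := le_of_two_le_repCount ha hb hab h
      have hab0 : 0 < a * b := Nat.mul_pos ha hb
      have heq : (j - a * b) + a * b = j := by omega
      have hstep := repCount_add a b ha hb hab (j - a * b)
      rw [heq] at hstep
      obtain ⟨j', hj'm, hj'1⟩ := ih (j - a * b) (by omega) (by omega)
      refine ⟨j', ?_, hj'1⟩
      rw [hj'm]
      conv_rhs => rw [← heq, Nat.add_mod_right]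

lemma repCount_pos {a b : ℕ} (ha : 0 < a) (hb : 0 < b) (hab : Nat.Coprime a b) {N : ℕ}
    (hN : a * b ≤ N) : 1 ≤ repCount a b N := by
  haveI : Finite {p : ℕ × ℕ // p.1 * a + p.2 * b = N} := (repSet_finite ha hb N).to_subtype
  obtain ⟨p, _, hp⟩ := rep_exists ha hb hab hN
  haveI : Nonempty {p : ℕ × ℕ // p.1 * a + p.2 * b = N} := ⟨⟨p, hp⟩⟩
  exact Nat.card_pos

lemma one_rep_unique {a b : ℕ} (ha : 0 < a) (hb : 0 < b) (hab : Nat.Coprime a b)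
    {j j' : ℕ} (hj : repCount a b j = 1) (hj' : repCount a b j' = 1)
    (hmod : j % (a * b) = j' % (a * b)) : j = j' := by
  have hab0 : 0 < a * b := Nat.mul_pos ha hb
  have key : ∀ x y : ℕ, x ≤ y → repCount a b x = 1 → repCount a b y = 1 →
      x % (a * b) = y % (a * b) → x = y := by
    intro x y hxy hx hy hm
    have hd : a * b ∣ y - x := (Nat.modEq_iff_dvd' hxy).mp hm
    obtain ⟨t, ht⟩ := hd
    have hyx : y = x + a * b * t := by omega
    rw [hyx, repCount_add_mul a b ha hb hab, hx] at hy
    have ht0 : t = 0 := by omega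
    subst ht0
    simp at hyx
    omega
  rcases Nat.le_total j j' with h | h
  · exact key j j' h hj hj' hmod
  · exact (key j' j h hj' hj hmod.symm).symm

lemma R_one_card {a b : ℕ} (ha : 0 < a) (hb : 0 < b) (hab : Nat.Coprime a b) :
    Nat.card {j : ℕ // repCount a b j = 1} = a * b := by
  have hab0 : 0 < a * b := Nat.mul_pos ha hb
  haveI : NeZero (a * b) := ⟨hab0.ne'⟩
  set φ : {j : ℕ // repCount a b j = 1} → ZMod (a * b) := fun j => (j.1 : ZMod (a * b))
  have hinj : Function.Injective φ := by
    rintro ⟨x, hx⟩ ⟨y, hy⟩ h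
    have : x % (a * b) = y % (a * b) := (ZMod.natCast_eq_natCast_iff _ _ _).mp h
    exact Subtype.ext (one_rep_unique ha hb hab hx hy this)
  have hsurj : Function.Surjective φ := by
    intro c
    have h1 : 1 ≤ repCount a b (c.val + a * b) :=
      repCount_pos ha hb hab (Nat.le_add_left _ _)
    obtain ⟨j', hj'm, hj'1⟩ := exists_one_rep ha hb hab _ h1
    refine ⟨⟨j', hj'1⟩, ?_⟩
    show (j' : ZMod (a * b)) = c
    have hc : ((c.val : ℕ) : ZMod (a * b)) = c := by rw [ZMod.natCast_val, ZMod.cast_id]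
    rw [← hc, ZMod.natCast_eq_natCast_iff, Nat.ModEq, hj'm, Nat.add_mod_right]
  rw [Nat.card_eq_of_bijective φ ⟨hinj, hsurj⟩, Nat.card_zmod]

lemma R_eq_image {a b : ℕ} (ha : 0 < a) (hb : 0 < b) (hab : Nat.Coprime a b)
    {k : ℕ} (hk : 1 ≤ k) :
    {j : ℕ | repCount a b j = k} =
      (fun i => i + a * b * (k - 1)) '' {j : ℕ | repCount a b j = 1} := by
  have hab0 : 0 < a * b := Nat.mul_pos ha hb
  ext j
  simp only [Set.mem_setOf_eq, Set.mem_image]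
  constructor
  · intro hj
    obtain ⟨j', hm, h1⟩ := exists_one_rep ha hb hab j (by omega)
    refine ⟨j', h1, ?_⟩
    have hle : j' ≤ j := by
      by_contra hcon
      push_neg at hcon
      have hd : a * b ∣ j' - j := (Nat.modEq_iff_dvd' hcon.le).mp hm.symm
      obtain ⟨t, ht⟩ := hd
      have ht1 : j' = j + a * b * t := by omega
      rw [ht1, repCount_add_mul a b ha hb hab, hj] at h1
      have ht0 : t = 0 := by omega
      subst ht0
      simp at ht1
      omega
    have hd : a * b ∣ j - j' := (Nat.modEq_iff_dvd' hle).mp hm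
    obtain ⟨t, ht⟩ := hd
    have ht1 : j = j' + a * b * t := by omega
    rw [ht1, repCount_add_mul a b ha hb hab, h1] at hj
    have htk : t = k - 1 := by omega
    rw [← htk, ← ht1]
  · rintro ⟨i, h1, rfl⟩
    rw [repCount_add_mul a b ha hb hab, h1]
    omega


/-- For fixed `m`, the `m`-th power sum over `R_k(a,b)` agrees, for `k ≥ 1`, with a
polynomial in `k` of degree `m` with leading coefficient `(ab)^(m+1)`. -/
theorem power_sum_polynomial (a b m : ℕ) (ha : 0 < a) (hb : 0 < b)
    (hab : Nat.Coprime a b) :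
    ∃ P : Polynomial ℚ, P.degree = m ∧ P.leadingCoeff = ((a : ℚ) * b) ^ (m + 1) ∧
      ∀ k : ℕ, 1 ≤ k →
        (∑ᶠ j ∈ {j : ℕ | repCount a b j = k}, (j : ℚ) ^ m) = P.eval (k : ℚ) := by
  have hab0 : 0 < a * b := Nat.mul_pos ha hb
  have habQ : ((a : ℚ) * b) ≠ 0 := by positivity
  -- the set R₁ is finite with cardinality a*b
  have hcard : Nat.card {j : ℕ // repCount a b j = 1} = a * b := R_one_card ha hb hab
  haveI hfinR : Finite {j : ℕ // repCount a b j = 1} :=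
    (Nat.card_pos_iff.mp (by omega)).2
  have hfin : {j : ℕ | repCount a b j = 1}.Finite := Set.finite_coe_iff.mp hfinR
  set S : Finset ℕ := hfin.toFinset with hS
  have hScard : S.card = a * b := by
    rw [hS, ← Set.ncard_eq_toFinset_card _ hfin, ← Nat.card_coe_set_eq]
    exact hcard
  -- the polynomial
  set d : ℕ → ℚ := fun j => (j : ℚ) / ((a : ℚ) * b) - 1 with hd
  set P : Polynomial ℚ := ∑ j ∈ S,
      Polynomial.C (((a : ℚ) * b) ^ m) * (Polynomial.X + Polynomial.C (d j)) ^ m with hP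
  have hterm_nd : ∀ j : ℕ,
      (Polynomial.C (((a : ℚ) * b) ^ m) * (Polynomial.X + Polynomial.C (d j)) ^ m).natDegree
        = m := by
    intro j
    rw [Polynomial.natDegree_C_mul (by positivity),
      Polynomial.natDegree_pow, Polynomial.natDegree_X_add_C, mul_one]
  have hterm_coeff : ∀ j : ℕ,
      (Polynomial.C (((a : ℚ) * b) ^ m) * (Polynomial.X + Polynomial.C (d j)) ^ m).coeff m
        = ((a : ℚ) * b) ^ m := by
    intro j
    rw [Polynomial.coeff_C_mul]
    have hmonic : ((Polynomial.X + Polynomial.C (d j)) ^ m).Monic :=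
      (Polynomial.monic_X_add_C (d j)).pow m
    have : ((Polynomial.X + Polynomial.C (d j)) ^ m).coeff m = 1 := by
      have hnd : ((Polynomial.X + Polynomial.C (d j)) ^ m).natDegree = m := by
        rw [Polynomial.natDegree_pow, Polynomial.natDegree_X_add_C, mul_one]
      have h2 := hmonic.coeff_natDegree
      rwa [hnd] at h2
    rw [this, mul_one]
  have hPnd : P.natDegree ≤ m :=
    Polynomial.natDegree_sum_le_of_forall_le S _ (fun j _ => le_of_eq (hterm_nd j))
  have hPcoeff : P.coeff m = ((a : ℚ) * b) ^ (m + 1) := by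
    rw [hP, Polynomial.finset_sum_coeff]
    rw [Finset.sum_congr rfl (fun j _ => hterm_coeff j), Finset.sum_const, hScard]
    push_cast [pow_succ]
    ring
  have hPcoeff_ne : P.coeff m ≠ 0 := by
    rw [hPcoeff]; positivity
  have hPdeg : P.degree = m := by
    apply Polynomial.degree_eq_of_le_of_coeff_ne_zero _ hPcoeff_ne
    calc P.degree ≤ P.natDegree := Polynomial.degree_le_natDegree
    _ ≤ (m : WithBot ℕ) := by exact_mod_cast hPnd
  have hPndeq : P.natDegree = m := Polynomial.natDegree_eq_of_degree_eq_some hPdeg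
  refine ⟨P, hPdeg, ?_, ?_⟩
  · rw [Polynomial.leadingCoeff, hPndeq, hPcoeff]
  · intro k hk
    -- identify the set with a finset
    have hset : {j : ℕ | repCount a b j = k} =
        ↑(S.image (fun i => i + a * b * (k - 1))) := by
      rw [Finset.coe_image, hS, Set.Finite.coe_toFinset]
      exact R_eq_image ha hb hab hk
    rw [hset, finsum_mem_coe_finset]
    rw [Finset.sum_image (by intro x _ y _ h; simp only at h; omega)]
    rw [hP, Polynomial.eval_finset_sum]
    apply Finset.sum_congr rfl
    intro j _
    rw [Polynomial.eval_mul, Polynomial.eval_C, Polynomial.eval_pow, Polynomial.eval_add,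
      Polynomial.eval_X, Polynomial.eval_C, ← mul_pow]
    congr 1
    rw [hd]
    have hk1 : ((k - 1 : ℕ) : ℚ) = (k : ℚ) - 1 := by
      rw [Nat.cast_sub hk]; norm_num
    push_cast [hk1]
    field_simp
    ring
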